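/- Define I(x, y, z) = (y − z)·e^{−x}/z on the open set {(x,y,z) ∈ ℝ³ : z ≠ 0}. Then on this set f·∂I/∂x + g·∂I/∂y + h·∂I/∂z = 0, where f(x,y,z) = x·(2y² − x), g(x,y,z) = −x²·y + x²·z + y³ and h(x,y,z) = −z·(2xy − 2xz − y)·y; that is, I is a first integral of the 3D system dx/dt = f, dy/dt = g, dz/dt = h. -/

import Mathlib

/-- Partial derivative in the `x` direction of a function on `ℝ³`. -/
noncomputable def pdX (F : ℝ × ℝ × ℝ → ℝ) (p : ℝ × ℝ × ℝ) : ℝ :=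
  fderiv ℝ F p (1, 0, 0)

/-- Partial derivative in the `y` direction. -/
noncomputable def pdY (F : ℝ × ℝ × ℝ → ℝ) (p : ℝ × ℝ × ℝ) : ℝ :=
  fderiv ℝ F p (0, 1, 0)

/-- Partial derivative in the `z` direction. -/
noncomputable def pdZ (F : ℝ × ℝ × ℝ → ℝ) (p : ℝ × ℝ × ℝ) : ℝ :=
  fderiv ℝ F p (0, 0, 1)

/-- The first integral `I(x,y,z) = (y − z)·e^{−x}/z`, with the point `p = (x, y, z)`. -/
noncomputable def Iinv : ℝ × ℝ × ℝ → ℝ := fun p =>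
  (p.2.1 - p.2.2) * Real.exp (-p.1) / p.2.2

/-!
Along a coordinate line through a point where `I` is differentiable, the partial derivative is an
ordinary one-variable derivative. With `e = exp (-x)` this gives `∂I/∂x = -I`, `∂I/∂y = e / z`
and `∂I/∂z = -y e / z²`, and after clearing the factor `e / z` the Lie derivative of `I` along the
field becomes a polynomial identity in `x, y, z`.
-/

section PartialDerivatives

variable {F : ℝ × ℝ × ℝ → ℝ} {x y z a : ℝ}

theorem pdX_eq_of_hasDerivAt (hF : DifferentiableAt ℝ F (x, y, z))
    (h : HasDerivAt (fun t => F (t, y, z)) a x) : pdX F (x, y, z) = a := by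
  have hcurve : HasDerivAt (fun t : ℝ => (t, y, z)) ((1 : ℝ), (0 : ℝ), (0 : ℝ)) x :=
    (hasDerivAt_id x).prodMk (hasDerivAt_const x _)
  exact (hF.hasFDerivAt.comp_hasDerivAt x hcurve).unique h

theorem pdY_eq_of_hasDerivAt (hF : DifferentiableAt ℝ F (x, y, z))
    (h : HasDerivAt (fun t => F (x, t, z)) a y) : pdY F (x, y, z) = a := by
  have hcurve : HasDerivAt (fun t : ℝ => (x, t, z)) ((0 : ℝ), (1 : ℝ), (0 : ℝ)) y :=
    (hasDerivAt_const y x).prodMk ((hasDerivAt_id y).prodMk (hasDerivAt_const y _))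
  exact (hF.hasFDerivAt.comp_hasDerivAt y hcurve).unique h

theorem pdZ_eq_of_hasDerivAt (hF : DifferentiableAt ℝ F (x, y, z))
    (h : HasDerivAt (fun t => F (x, y, t)) a z) : pdZ F (x, y, z) = a := by
  have hcurve : HasDerivAt (fun t : ℝ => (x, y, t)) ((0 : ℝ), (0 : ℝ), (1 : ℝ)) z :=
    (hasDerivAt_const z x).prodMk ((hasDerivAt_const z y).prodMk (hasDerivAt_id z))
  exact (hF.hasFDerivAt.comp_hasDerivAt z hcurve).unique h

end PartialDerivatives

section Iinv

variable {x y z : ℝ}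

theorem differentiableAt_Iinv (hz : z ≠ 0) : DifferentiableAt ℝ Iinv (x, y, z) := by
  unfold Iinv
  fun_prop (disch := exact hz)

theorem pdX_Iinv (hz : z ≠ 0) : pdX Iinv (x, y, z) = -((y - z) * Real.exp (-x) / z) := by
  refine pdX_eq_of_hasDerivAt (differentiableAt_Iinv hz) ?_
  refine ((((hasDerivAt_neg x).exp).const_mul (y - z)).div_const z).congr_deriv ?_
  ring

theorem pdY_Iinv (hz : z ≠ 0) : pdY Iinv (x, y, z) = Real.exp (-x) / z := by
  refine pdY_eq_of_hasDerivAt (differentiableAt_Iinv hz) ?_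
  refine ((((hasDerivAt_id' y).sub_const z).mul_const (Real.exp (-x))).div_const z).congr_deriv ?_
  ring

theorem pdZ_Iinv (hz : z ≠ 0) : pdZ Iinv (x, y, z) = -(y * Real.exp (-x) / z ^ 2) := by
  refine pdZ_eq_of_hasDerivAt (differentiableAt_Iinv hz) ?_
  refine ((((hasDerivAt_id' z).const_sub y).mul_const (Real.exp (-x))).div
    (hasDerivAt_id' z) hz).congr_deriv ?_
  field_simp
  ring

end Iinv

theorem Iinv_is_first_integral_exp_system :
    ∀ p : ℝ × ℝ × ℝ, p.2.2 ≠ 0 →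
      p.1 * (2 * p.2.1 ^ 2 - p.1) * pdX Iinv p
        + (-p.1 ^ 2 * p.2.1 + p.1 ^ 2 * p.2.2 + p.2.1 ^ 3) * pdY Iinv p
        + (-p.2.2 * (2 * p.1 * p.2.1 - 2 * p.1 * p.2.2 - p.2.1) * p.2.1) * pdZ Iinv p
        = 0 := by
  rintro ⟨x, y, z⟩ (hz : z ≠ 0)
  rw [pdX_Iinv hz, pdY_Iinv hz, pdZ_Iinv hz]
  field_simp
  ring
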